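/- Let a be a nonzero integer and p a prime with p ∤ 3a and p ≡ 1 (mod 3). Set A_p = 1 + #{(x,y) ∈ 𝔽_p × 𝔽_p : y² + ay = x³} and t_p = 1 + p − A_p. Then t_p ≡ C(2(p−1)/3, (p−1)/3) · a^{(p−1)/3} (mod p). -/

import Mathlib

/-!
Completing the square, `y² + ay = x³` has `1 + (a² + 4x³)^((p-1)/2)` solutions `y` modulo `p`,
so `A_p - 1 ≡ ∑ₓ (a² + 4x³)^((p-1)/2)`. Expanding, and using that `∑ₓ x^k` vanishes in `𝔽_p`
unless `k` is a positive multiple of `p - 1` (when it is `-1`), only the term in `x^(p-1)` survives: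
`A_p - 1 ≡ -C((p-1)/2, m) 4^m a^m` with `m = (p-1)/3`. Finally `(p-1)/2 ≡ -1/2`, and
`C(-1/2, m) (-4)^m = C(2m, m)`.
-/

open Finset

theorem Nat.card_sq_add_mul_eq_card_sq {K : Type*} [Field K] (h2 : (2 : K) ≠ 0) (a c : K) :
    Nat.card {y : K // y ^ 2 + a * y = c} = Nat.card {z : K // z ^ 2 = a ^ 2 + 4 * c} := by
  refine Nat.card_congr (Equiv.subtypeEquiv
    ((Equiv.mulLeft₀ (2 : K) h2).trans (Equiv.addRight a)) fun y => ?_)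
  simp only [Equiv.trans_apply, Equiv.mulLeft₀_apply, Equiv.coe_addRight]
  constructor
  · intro h
    linear_combination 4 * h
  · intro h
    apply mul_left_cancel₀ (pow_ne_zero 2 h2)
    linear_combination h

namespace FiniteField

variable {K : Type*} [Field K] [Fintype K]

theorem sum_pow_eq_ite (i : ℕ) :
    ∑ x : K, x ^ i = if i ≠ 0 ∧ Fintype.card K - 1 ∣ i then -1 else 0 := by
  classical
  rcases eq_or_ne i 0 with rfl | hi
  · simp
  have hunits : ∑ x : Kˣ, (x : K) ^ i = ∑ x : K, x ^ i := by
    rw [← Fintype.sum_subtype_add_sum_subtype (· ≠ 0) (· ^ i),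
      Fintype.sum_equiv unitsEquivNeZero (fun x : Kˣ => (x : K) ^ i)
        (fun x : {a : K // a ≠ 0} => (x : K) ^ i) (fun _ => rfl),
      Fintype.sum_eq_zero (fun x : {a : K // ¬a ≠ 0} => (x : K) ^ i)
        (fun x => by rw [not_not.mp x.2, zero_pow hi]), add_zero]
  rw [← hunits, sum_pow_units]
  simp [hi]

theorem cast_card_sq_eq (hK : ringChar K ≠ 2) (d : K) :
    (Nat.card {z : K // z ^ 2 = d} : K) = 1 + d ^ (Fintype.card K / 2) := by
  classical
  have h := congrArg (Int.cast : ℤ → K) (quadraticChar_card_sqrts hK d)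
  rw [Int.cast_add, quadraticChar_eq_pow_of_char_ne_two' hK, Int.cast_one, add_comm] at h
  rw [← h, ← Nat.card_eq_card_toFinset {z : K | z ^ 2 = d}, Int.cast_natCast]
  rfl

theorem sum_add_mul_pow_pow {d m n : ℕ} (hm : d * m = Fintype.card K - 1)
    (hn : d * n < 2 * (Fintype.card K - 1)) (b c : K) :
    ∑ x : K, (b + c * x ^ d) ^ n = -(n.choose m * b ^ (n - m) * c ^ m) := by
  have hterm (k : ℕ) :
      ∑ x : K, (c * x ^ d) ^ k * b ^ (n - k) * n.choose k
        = n.choose k * b ^ (n - k) * c ^ k * ∑ x : K, x ^ (d * k) := by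
    rw [mul_sum]
    refine sum_congr rfl fun x _ => ?_
    rw [mul_pow, ← pow_mul]
    ring
  simp_rw [add_comm b, add_pow]
  rw [sum_comm, sum_congr rfl fun k _ => hterm k]
  rw [sum_eq_single m]
  · rw [sum_pow_eq_ite, if_pos ⟨by omega, hm ▸ dvd_rfl⟩, mul_neg_one]
  · intro k hk hkm
    rw [sum_pow_eq_ite, if_neg, mul_zero]
    rintro ⟨hk0, hdvd⟩
    have hkn : d * k ≤ d * n := Nat.mul_le_mul_left d (Nat.lt_succ_iff.mp (mem_range.mp hk))
    have : d * k = d * m := hm ▸ Nat.eq_of_dvd_of_lt_two_mul hk0 hdvd (hkn.trans_lt hn)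
    exact hkm (Nat.eq_of_mul_eq_mul_left (Nat.pos_of_ne_zero (left_ne_zero_of_mul hk0)) this)
  · intro hmn
    rw [Nat.choose_eq_zero_of_lt (by simpa using hmn)]
    simp

theorem cast_card_sq_add_mul_eq_cube (hK : ringChar K ≠ 2) (hq : Fintype.card K % 3 = 1) (a : K) :
    (Nat.card {P : K × K // P.2 ^ 2 + a * P.2 = P.1 ^ 3} : K) =
      -((Fintype.card K / 2).choose ((Fintype.card K - 1) / 3) * 4 ^ ((Fintype.card K - 1) / 3) *
        a ^ ((Fintype.card K - 1) / 3)) := by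
  have hodd := odd_card_of_char_ne_two hK
  have hq1 : 1 < Fintype.card K := Fintype.one_lt_card
  have hfiber (x : K) : (Nat.card {y : K // y ^ 2 + a * y = x ^ 3} : K) =
      1 + (a ^ 2 + 4 * x ^ 3) ^ (Fintype.card K / 2) := by
    rw [Nat.card_sq_add_mul_eq_card_sq (Ring.two_ne_zero hK), cast_card_sq_eq hK]
  rw [Nat.card_congr (Equiv.subtypeProdEquivSigmaSubtype fun x y => y ^ 2 + a * y = x ^ 3),
    Nat.card_sigma, Nat.cast_sum, sum_congr rfl fun x _ => hfiber x, sum_add_distrib,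
    sum_const, card_univ, nsmul_one, cast_card_eq_zero, zero_add,
    sum_add_mul_pow_pow (d := 3) (m := (Fintype.card K - 1) / 3)
      (n := Fintype.card K / 2) (by omega) (by omega), ← pow_mul]
  rw [show 2 * (Fintype.card K / 2 - (Fintype.card K - 1) / 3) = (Fintype.card K - 1) / 3 by
    omega]
  ring

end FiniteField

/-- `C(-1/2, m) (-4)^m = C(2m, m)`: both sides satisfy `(m + 1) f (m + 1) = 2 (2m + 1) f m`. -/
theorem ZMod.choose_mul_neg_four_pow {p : ℕ} [Fact p.Prime] {s m : ℕ}
    (hs : (2 * s + 1 : ZMod p) = 0) (hms : m ≤ s) (hmp : m < p) :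
    (s.choose m : ZMod p) * (-4) ^ m = m.centralBinom := by
  induction m with
  | zero => simp
  | succ m ih =>
    have hm1 : (m + 1 : ZMod p) ≠ 0 := by
      exact_mod_cast (ZMod.natCast_eq_zero_iff _ _).not.mpr
        (Nat.not_dvd_of_pos_of_lt m.succ_pos hmp)
    apply mul_left_cancel₀ hm1
    have hchoose := congrArg (Nat.cast : ℕ → ZMod p) (Nat.choose_succ_right_eq s m)
    have hcentral := congrArg (Nat.cast : ℕ → ZMod p) (Nat.succ_mul_centralBinom_succ m)
    push_cast [Nat.cast_sub (by omega : m ≤ s)] at hchoose hcentral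
    rw [hcentral, ← ih (by omega) (by omega)]
    linear_combination (-4) ^ (m + 1) * hchoose + -2 * (-4) ^ m * s.choose m * hs

theorem stmt14_general (a : ℤ) (p : ℕ) (hp : p.Prime)
    (hp3 : p % 3 = 1)
    (Ap : ℕ)
    (hAp : Ap = 1 + Nat.card {P : ZMod p × ZMod p //
      P.2 ^ 2 + (a : ZMod p) * P.2 = P.1 ^ 3})
    (tp : ℤ) (htp : tp = 1 + (p : ℤ) - (Ap : ℤ)) :
    tp ≡ ((2 * ((p - 1) / 3)).choose ((p - 1) / 3) : ℤ) * a ^ ((p - 1) / 3) [ZMOD p] := by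
  have := Fact.mk hp
  have hp2 : p ≠ 2 := by omega
  have hodd : p % 2 = 1 := Nat.odd_iff.mp (hp.odd_of_ne_two hp2)
  have hcount := FiniteField.cast_card_sq_add_mul_eq_cube (K := ZMod p)
    (by rwa [ZMod.ringChar_zmod_n]) (by rwa [ZMod.card]) a
  rw [ZMod.card] at hcount
  have hhalf : (2 * (p / 2 : ℕ) + 1 : ZMod p) = 0 := by
    have : ((2 * (p / 2) + 1 : ℕ) : ZMod p) = 0 := by
      rw [show 2 * (p / 2) + 1 = p by omega, ZMod.natCast_self]
    exact_mod_cast this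
  have hbinom := ZMod.choose_mul_neg_four_pow hhalf (m := (p - 1) / 3) (by omega) (by omega)
  rw [Even.neg_pow ⟨(p - 1) / 6, by omega⟩, Nat.centralBinom_eq_two_mul_choose] at hbinom
  rw [← ZMod.intCast_eq_intCast_iff, htp, hAp]
  push_cast
  rw [hcount, hbinom, ZMod.natCast_self]
  ring

theorem stmt14 (a : ℤ) (ha : a ≠ 0) (p : ℕ) (hp : p.Prime)
    (hpa : ¬ ((p : ℤ) ∣ 3 * a)) (hp3 : p % 3 = 1)
    (Ap : ℕ)
    (hAp : Ap = 1 + Nat.card {P : ZMod p × ZMod p //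
      P.2 ^ 2 + (a : ZMod p) * P.2 = P.1 ^ 3})
    (tp : ℤ) (htp : tp = 1 + (p : ℤ) - (Ap : ℤ)) :
    tp ≡ ((2 * ((p - 1) / 3)).choose ((p - 1) / 3) : ℤ) * a ^ ((p - 1) / 3) [ZMOD p] :=
  stmt14_general a p hp hp3 Ap hAp tp htp
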